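/- (Estimate (3.2)) Assume A_s is star-normal (it commutes with its adjoint), as the paper asserts for L_s. Let λ : ℝ and ψ ≠ 0 with A ψ = λ • ψ. Then the distance from the complex number λ (on the real axis) to the spectrum of A_s satisfies Metric.infDist (λ : ℂ) (spectrum ℂ A_s) ≤ s · ‖P ψ‖ / ‖ψ‖ = s · τ(ψ) = s · δ(ψ, Ω∖R). -/

import Mathlib

/-!
For a normal operator `T`, the resolvent `(z - T)⁻¹` is normal, so its norm equals its spectral
radius, which is `1 / dist(z, σ(T))`. Hence `dist(z, σ(T)) ‖x‖ ≤ ‖(T - z) x‖` for every `x`.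
With `T = A_s`, `z = λ` and `x = ψ`, the eigenvalue equation gives `(A_s - λ) ψ = i s P ψ`.
-/

open Metric

theorem IsStarNormal.algebraMap_sub {R A : Type*} [CommSemiring R] [StarRing R] [Ring A]
    [StarRing A] [Algebra R A] [StarModule R A] (r : R) (a : A) [IsStarNormal a] :
    IsStarNormal (algebraMap R A r - a) := by
  rw [Algebra.algebraMap_eq_smul_one]
  exact ((Commute.one_left (star a)).smul_left r).isStarNormal_sub

theorem norm_resolvent_le_inv_infDist {A : Type*} [CStarAlgebra A] {a : A} [IsStarNormal a]
    {z : ℂ} (hz : z ∉ spectrum ℂ a) (hd : 0 < infDist z (spectrum ℂ a)) :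
    ‖resolvent a z‖ ≤ (infDist z (spectrum ℂ a))⁻¹ := by
  have hu : z ∈ resolventSet ℂ a := spectrum.mem_resolventSet_iff.mpr (spectrum.notMem_iff.mp hz)
  have : IsStarNormal (hu.unit : A) := by
    rw [hu.unit_spec]; exact IsStarNormal.algebraMap_sub z a
  have : IsStarNormal (resolvent a z) := spectrum.resolvent_eq hu ▸ inferInstance
  let D : NNReal := ⟨_, (inv_pos.mpr hd).le⟩
  have hspec : ∀ k ∈ spectrum ℂ (resolvent a z), ‖k‖₊ ≤ D := by
    rw [spectrum.resolvent_eq hu, ← spectrum.map_inv, hu.unit_spec, ← spectrum.singleton_sub_eq]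
    rintro k ⟨_, rfl, μ, hμ, hk⟩
    rw [← NNReal.coe_le_coe, coe_nnnorm, ← inv_inv k, norm_inv, ← hk]
    exact inv_anti₀ hd ((infDist_le_dist_of_mem hμ).trans_eq (dist_eq_norm _ _))
  have hsr : spectralRadius ℂ (resolvent a z) ≤ D :=
    iSup₂_le fun k hk => ENNReal.coe_le_coe.mpr (hspec k hk)
  rw [IsStarNormal.spectralRadius_eq_nnnorm, ENNReal.coe_le_coe] at hsr
  exact NNReal.coe_le_coe.mpr hsr

theorem infDist_spectrum_mul_norm_le {H : Type*} [NormedAddCommGroup H] [InnerProductSpace ℂ H]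
    [CompleteSpace H] (T : H →L[ℂ] H) [IsStarNormal T] (z : ℂ) (x : H) :
    infDist z (spectrum ℂ T) * ‖x‖ ≤ ‖T x - z • x‖ := by
  rcases (infDist_nonneg : 0 ≤ infDist z (spectrum ℂ T)).eq_or_lt with hd | hd
  · rw [← hd, zero_mul]; exact norm_nonneg _
  have hz : z ∉ spectrum ℂ T := fun h => hd.ne' (infDist_zero_of_mem h)
  have hx : resolvent T z (z • x - T x) = x := by
    have h := Ring.inverse_mul_cancel _ (spectrum.notMem_iff.mp hz)
    simpa [resolvent, Algebra.algebraMap_eq_smul_one] using congr($h x)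
  calc infDist z (spectrum ℂ T) * ‖x‖
      ≤ infDist z (spectrum ℂ T) * (‖resolvent T z‖ * ‖z • x - T x‖) := by
        gcongr
        conv_lhs => rw [← hx]
        exact (resolvent T z).le_opNorm _
    _ ≤ infDist z (spectrum ℂ T) * ((infDist z (spectrum ℂ T))⁻¹ * ‖z • x - T x‖) := by
        gcongr; exact norm_resolvent_le_inv_infDist hz hd
    _ = ‖T x - z • x‖ := by rw [← mul_assoc, mul_inv_cancel₀ hd.ne', one_mul, norm_sub_rev]

theorem stmt14_general {H : Type*} [NormedAddCommGroup H] [InnerProductSpace ℂ H] [CompleteSpace H]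
    (A P : H →L[ℂ] H)
    (s : ℝ) (hs : 0 < s)
    (hnormal : IsStarNormal (A + (s * Complex.I) • P))
    (lam : ℝ) (ψ : H) (hψ : ψ ≠ 0) (heig : A ψ = (lam : ℂ) • ψ) :
    Metric.infDist (lam : ℂ) (spectrum ℂ (A + (s * Complex.I) • P))
      ≤ s * ‖P ψ‖ / ‖ψ‖ := by
  have hshift : (A + (s * Complex.I) • P) ψ - (lam : ℂ) • ψ = (s * Complex.I) • P ψ := by
    simp [heig]
  have hnorm : ‖(s * Complex.I) • P ψ‖ = s * ‖P ψ‖ := by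
    simp [norm_smul, abs_of_pos hs]
  rw [le_div_iff₀ (norm_pos_iff.mpr hψ), ← hnorm, ← hshift]
  exact infDist_spectrum_mul_norm_le _ _ ψ

/-- Estimate (3.2): if `A_s` is star-normal and `A ψ = λ ψ` with `ψ ≠ 0`, then
`dist(λ, Spec(A_s)) ≤ s ‖P ψ‖ / ‖ψ‖ = s τ(ψ)`. -/
theorem stmt14 {H : Type*} [NormedAddCommGroup H] [InnerProductSpace ℂ H] [CompleteSpace H]
    (A P : H →L[ℂ] H) (hA : IsSelfAdjoint A) (hP : IsSelfAdjoint P) (hP2 : P ∘L P = P)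
    (s : ℝ) (hs : 0 < s)
    (hnormal : IsStarNormal (A + (s * Complex.I) • P))
    (lam : ℝ) (ψ : H) (hψ : ψ ≠ 0) (heig : A ψ = (lam : ℂ) • ψ) :
    Metric.infDist (lam : ℂ) (spectrum ℂ (A + (s * Complex.I) • P))
      ≤ s * ‖P ψ‖ / ‖ψ‖ :=
  stmt14_general A P s hs hnormal lam ψ hψ heig
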